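/- arXiv:2009.04853 — 3 statements merged into one kernel-verified Lean document; each statement's English description precedes it below -/
import Mathlib

section
/- For a positive integer p and any integer k: \sum_{s=0}^{p} \binom{p}{s} B_s^{(k)}/(p+2-s) = B_{p+1}^{(k)}(1)/(p+1) - B_{p+2}^{(k)}(1)/((p+1)(p+2)) + B_{p+2}^{(k)}/((p+1)(p+2)). -/
noncomputable section

/-- Signed Stirling numbers of the first kind. -/
def stirling1 : ℕ → ℕ → ℤ
  | 0, 0 => 1
  | 0, _ + 1 => 0
  | _ + 1, 0 => 0
  | n + 1, m + 1 => stirling1 n m - n * stirling1 n (m + 1)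

/-- `n!`-normalized coefficients of `Ei_k (log (1+t))`. -/
def polyExpCoeff (k : ℤ) (n : ℕ) : ℚ :=
  ∑ m ∈ Finset.Icc 1 n, (stirling1 n m : ℚ) / (m : ℚ) ^ (k - 1)

/-- Type 2 poly-Bernoulli numbers of index `k`, defined by the recursion coming from the
generating function `Ei_k (log (1+t)) / (e^t - 1) = ∑ B_n^{(k)} t^n/n!`. -/
def polyBernoulli (k : ℤ) : ℕ → ℚ
  | n =>
    (polyExpCoeff k (n + 1) -
      ∑ l ∈ (Finset.range n).attach, ((n + 1).choose l.1 : ℚ) * polyBernoulli k l.1) / (n + 1)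
  termination_by n => n
  decreasing_by exact Finset.mem_range.mp l.2

/-- Type 2 poly-Bernoulli polynomials of index `k`, as functions on `ℝ`. -/
def polyBernoulliPoly (k : ℤ) (n : ℕ) (x : ℝ) : ℝ :=
  ∑ l ∈ Finset.range (n + 1), (n.choose l : ℝ) * (polyBernoulli k l : ℝ) * x ^ (n - l)

/-- Bernoulli polynomials as functions on `ℝ`. -/
def bernoulliPolyFun (n : ℕ) (x : ℝ) : ℝ :=
  ∑ l ∈ Finset.range (n + 1), (n.choose l : ℝ) * (bernoulli l : ℝ) * x ^ (n - l)

/-- Bernoulli functions `B̄_n(x) = B_n(⟨x⟩)`. -/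
def bernoulliBar (n : ℕ) (x : ℝ) : ℝ := bernoulliPolyFun n (Int.fract x)

/-- Type 2 poly-Bernoulli functions `B̄_n^{(k)}(x) = B_n^{(k)}(⟨x⟩)`. -/
def polyBernoulliBar (k : ℤ) (n : ℕ) (x : ℝ) : ℝ := polyBernoulliPoly k n (Int.fract x)

/-- Poly-Dedekind sums `S_p^{(k)}(h,m)`. -/
def polyDedekindSum (k : ℤ) (p h m : ℕ) : ℝ :=
  ∑ μ ∈ Finset.Ico 1 m, (μ / m : ℝ) * polyBernoulliBar k p (h * μ / m)

/-- Apostol's generalized Dedekind sums `S_p(h,m)`. -/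
def genDedekindSum (p h m : ℕ) : ℝ :=
  ∑ μ ∈ Finset.Ico 1 m, (μ / m : ℝ) * bernoulliBar p (h * μ / m)

/-- The polyexponential function `Ei_k`. -/
def polyExp (k : ℤ) (x : ℝ) : ℝ :=
  ∑' n : ℕ, x ^ (n + 1) / ((n + 1 : ℝ) ^ k * (Nat.factorial n : ℝ))

/-- The sawtooth function `((x))`. -/
def sawtooth (x : ℝ) : ℝ := if Int.fract x = 0 then 0 else Int.fract x - 1 / 2

end

/-! The identity is linear in the sequence `B_s^{(k)}` and holds for every sequence: it follows
termwise from `C(p,s)/(p+2-s) = C(p+1,s)/(p+1) - C(p+2,s)/((p+1)(p+2))` together with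
`B_n^{(k)}(1) = ∑_{l ≤ n} C(n,l) B_l^{(k)}`, whose top terms account for the remaining summands. -/

open Finset

theorem choose_div_add_two_sub {K : Type*} [Field K] [CharZero K] {p s : ℕ} (hs : s ≤ p) :
    (p.choose s : K) / ((p + 2 - s : ℕ) : K) =
      ((p + 1).choose s : K) / (p + 1) - ((p + 2).choose s : K) / ((p + 1) * (p + 2)) := by
  obtain ⟨q, rfl⟩ := Nat.exists_eq_add_of_le hs
  have h₁ : ((s + q).choose s : K) * (s + q + 1) = ((s + q + 1).choose s : K) * (q + 1) := by
    exact_mod_cast (Nat.choose_mul_succ_eq (s + q) s).trans (by congr 1; omega)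
  have h₂ : ((s + q + 1).choose s : K) * (s + q + 2) = ((s + q + 2).choose s : K) * (q + 2) := by
    exact_mod_cast (Nat.choose_mul_succ_eq (s + q + 1) s).trans (by congr 1; omega)
  have hq : (q + 2 : K) ≠ 0 := by exact_mod_cast (q + 1).succ_ne_zero
  have hp₁ : (s + q + 1 : K) ≠ 0 := by exact_mod_cast (s + q).succ_ne_zero
  have hp₂ : (s + q + 2 : K) ≠ 0 := by exact_mod_cast (s + q + 1).succ_ne_zero
  rw [show s + q + 2 - s = q + 2 by omega]
  push_cast
  field_simp
  linear_combination ((s : K) + q + 2) * h₁ - h₂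

theorem sum_choose_mul_div_add_two_sub {K : Type*} [Field K] [CharZero K] (b : ℕ → K) (p : ℕ) :
    ∑ s ∈ range (p + 1), (p.choose s : K) * b s / ((p + 2 - s : ℕ) : K) =
      (∑ l ∈ range (p + 1 + 1), ((p + 1).choose l : K) * b l) / (p + 1) -
        (∑ l ∈ range (p + 2 + 1), ((p + 2).choose l : K) * b l) / ((p + 1) * (p + 2)) +
        b (p + 2) / ((p + 1) * (p + 2)) := by
  have hp₁ : (p + 1 : K) ≠ 0 := by exact_mod_cast p.succ_ne_zero
  have hp₂ : (p + 2 : K) ≠ 0 := by exact_mod_cast (p + 1).succ_ne_zero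
  have hterm : ∀ s ∈ range (p + 1), (p.choose s : K) * b s / ((p + 2 - s : ℕ) : K) =
      ((p + 1).choose s : K) * b s / (p + 1) -
        ((p + 2).choose s : K) * b s / ((p + 1) * (p + 2)) := fun s hs => by
    rw [mul_div_right_comm, choose_div_add_two_sub (Nat.lt_succ_iff.mp (mem_range.mp hs))]
    ring
  rw [sum_congr rfl hterm, sum_sub_distrib, ← sum_div, ← sum_div,
    sum_range_succ _ (p + 1), sum_range_succ _ (p + 2), sum_range_succ _ (p + 1),
    Nat.choose_self, Nat.choose_self, Nat.choose_succ_self_right]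
  push_cast
  field_simp
  ring

theorem polyBernoulliPoly_one (k : ℤ) (n : ℕ) :
    polyBernoulliPoly k n 1 = ∑ l ∈ range (n + 1), (n.choose l : ℝ) * (polyBernoulli k l : ℝ) := by
  simp only [polyBernoulliPoly, one_pow, mul_one]

theorem polyBernoulli_identity2_general (p : ℕ) (k : ℤ) :
    ∑ s ∈ Finset.range (p + 1), (p.choose s : ℝ) * (polyBernoulli k s : ℝ) / ((p + 2 - s : ℕ)) =
      polyBernoulliPoly k (p + 1) 1 / (p + 1) -
        polyBernoulliPoly k (p + 2) 1 / ((p + 1) * (p + 2)) +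
        (polyBernoulli k (p + 2) : ℝ) / ((p + 1) * (p + 2)) := by
  rw [polyBernoulliPoly_one, polyBernoulliPoly_one]
  exact sum_choose_mul_div_add_two_sub (fun l => (polyBernoulli k l : ℝ)) p

/-- `∑_{s=0}^p (p choose s) B_s^{(k)}/(p+2-s)
  = B_{p+1}^{(k)}(1)/(p+1) - B_{p+2}^{(k)}(1)/((p+1)(p+2)) + B_{p+2}^{(k)}/((p+1)(p+2))`. -/
theorem polyBernoulli_identity2 (p : ℕ) (hp : 0 < p) (k : ℤ) :
    ∑ s ∈ Finset.range (p + 1), (p.choose s : ℝ) * (polyBernoulli k s : ℝ) / ((p + 2 - s : ℕ)) =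
      polyBernoulliPoly k (p + 1) 1 / (p + 1) -
        polyBernoulliPoly k (p + 2) 1 / ((p + 1) * (p + 2)) +
        (polyBernoulli k (p + 2) : ℝ) / ((p + 1) * (p + 2)) :=
  polyBernoulli_identity2_general p k
end

section
/- For any integer k, positive integer d, and n \ge 0: B_n^{(k)}(x) = \sum_{j=0}^{n} \sum_{i=0}^{d-1} \sum_{l=1}^{n-j+1} \binom{n}{j} d^{j-1} B_j((x+i)/d) \cdot S_1(n-j+1, l) / ((n-j+1) l^{k-1}). -/
/-!
The exponential generating function of `B_n^{(k)}` is `Ei_k(log(1+t)) / (e^t - 1)`. Writing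
`Ei_k(log(1+t)) = t C(t)`, it factors as `t/(e^t - 1) · C(t)`, so `B_n^{(k)}(x)` is the binomial
convolution of the Bernoulli polynomials `B_j(x)` with the coefficients of `C`. Raabe's
multiplication theorem `B_j(x) = d^{j-1} ∑_{i<d} B_j((x+i)/d)`, which comes from
`dt/(e^{dt} - 1) · (e^{dt} - 1)/(e^t - 1) = d · t/(e^t - 1)`, then turns this into the formula.
-/
open Finset PowerSeries
open scoped Nat

section ExpGenFun

variable {K : Type*} [Field K]

def egf (a : ℕ → K) : K⟦X⟧ := mk fun n => a n / n !

theorem coeff_egf (a : ℕ → K) (n : ℕ) : coeff n (egf a) = a n / n ! := coeff_mk _ _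

theorem egf_sub (a b : ℕ → K) : egf a - egf b = egf (a - b) := by
  ext n
  simp only [map_sub, coeff_egf, Pi.sub_apply, sub_div]

variable [CharZero K]

theorem egf_injective : Function.Injective (egf : (ℕ → K) → K⟦X⟧) := by
  intro a b h
  funext n
  simpa [coeff_egf, Nat.factorial_ne_zero] using congrArg (coeff n) h

theorem egf_mul (a b : ℕ → K) :
    egf a * egf b = egf fun n => ∑ j ∈ range (n + 1), n.choose j * a j * b (n - j) := by
  ext n
  rw [coeff_mul, Nat.sum_antidiagonal_eq_sum_range_succ_mk, coeff_egf, sum_div]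
  refine sum_congr rfl fun j hj => ?_
  have hj : j ≤ n := Nat.lt_succ_iff.mp (mem_range.mp hj)
  rw [coeff_egf, coeff_egf, Nat.choose_eq_factorial_div_factorial hj,
    Nat.cast_div_charZero (Nat.factorial_mul_factorial_dvd_factorial hj)]
  have hn : (n ! : K) ≠ 0 := by exact_mod_cast n.factorial_ne_zero
  push_cast
  field_simp

theorem egf_pow (x : K) : egf (x ^ ·) = rescale x (exp K) := by
  ext n
  simp [coeff_egf, coeff_exp, div_eq_mul_inv]

theorem egf_one : egf 1 = exp K := by
  simpa [Pi.one_def] using egf_pow (1 : K)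

theorem egf_bernoulli : egf (fun n => (bernoulli n : K)) = bernoulliPowerSeries K := by
  ext n
  simp [coeff_egf, bernoulliPowerSeries]

theorem exp_sub_one_ne_zero : exp K - 1 ≠ 0 := fun h => by
  simpa [coeff_exp] using congrArg (coeff 1) h

theorem rescale_bernoulliPowerSeries_mul_sum_exp_pow (d : ℕ) :
    rescale (d : K) (bernoulliPowerSeries K) * ∑ i ∈ range d, exp K ^ i =
      C (d : K) * bernoulliPowerSeries K := by
  apply mul_right_cancel₀ (exp_sub_one_ne_zero (K := K))
  calc rescale (d : K) (bernoulliPowerSeries K) * (∑ i ∈ range d, exp K ^ i) * (exp K - 1)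
      = rescale (d : K) (bernoulliPowerSeries K * (exp K - 1)) := by
        rw [mul_assoc, geom_sum_mul, exp_pow_eq_rescale_exp, map_mul, map_sub, map_one]
    _ = C (d : K) * bernoulliPowerSeries K * (exp K - 1) := by
        rw [bernoulliPowerSeries_mul_exp_sub_one, mul_assoc, bernoulliPowerSeries_mul_exp_sub_one,
          rescale_X]

end ExpGenFun

theorem egf_bernoulliPolyFun (x : ℝ) :
    egf (bernoulliPolyFun · x) = bernoulliPowerSeries ℝ * rescale x (exp ℝ) := by
  rw [← egf_bernoulli, ← egf_pow, egf_mul]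
  rfl

theorem sum_rescale_egf_bernoulliPolyFun {d : ℕ} (hd : d ≠ 0) (x : ℝ) :
    ∑ i ∈ range d, rescale (d : ℝ) (egf (bernoulliPolyFun · ((x + i) / d))) =
      C (d : ℝ) * egf (bernoulliPolyFun · x) := by
  have hd' : (d : ℝ) ≠ 0 := Nat.cast_ne_zero.mpr hd
  have hshift (i : ℕ) :
      rescale ((x + i) / d * d) (exp ℝ) = rescale x (exp ℝ) * exp ℝ ^ i := by
    rw [div_mul_cancel₀ _ hd', exp_pow_eq_rescale_exp, exp_mul_exp_eq_exp_add]
  simp only [egf_bernoulliPolyFun, map_mul, rescale_rescale, hshift, ← mul_sum]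
  rw [mul_left_comm, rescale_bernoulliPowerSeries_mul_sum_exp_pow]
  ring

theorem bernoulliPolyFun_eq_zpow_mul_sum {d : ℕ} (hd : d ≠ 0) (j : ℕ) (x : ℝ) :
    bernoulliPolyFun j x =
      (d : ℝ) ^ ((j : ℤ) - 1) * ∑ i ∈ range d, bernoulliPolyFun j ((x + i) / d) := by
  have hd' : (d : ℝ) ≠ 0 := Nat.cast_ne_zero.mpr hd
  have h := congrArg (coeff j) (sum_rescale_egf_bernoulliPolyFun hd x)
  simp only [map_sum, coeff_rescale, coeff_egf, coeff_C_mul, ← mul_sum, ← sum_div] at h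
  rw [zpow_sub₀ hd', zpow_natCast, zpow_one]
  field_simp at h ⊢
  linear_combination -h

theorem polyExpCoeff_zero (k : ℤ) : polyExpCoeff k 0 = 0 := by
  simp [polyExpCoeff]

theorem sum_range_choose_mul_polyBernoulli (k : ℤ) (n : ℕ) :
    ∑ l ∈ range (n + 1), ((n + 1).choose l : ℚ) * polyBernoulli k l =
      polyExpCoeff k (n + 1) := by
  rw [sum_range_succ, Nat.choose_succ_self_right, polyBernoulli,
    sum_attach (range n) fun l => ((n + 1).choose l : ℚ) * polyBernoulli k l]
  push_cast
  field_simp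
  ring

theorem egf_polyBernoulli_mul_exp_sub_one (k : ℤ) :
    egf (fun n => (polyBernoulli k n : ℝ)) * (exp ℝ - 1) =
      egf fun n => (polyExpCoeff k n : ℝ) := by
  rw [mul_sub, mul_one, ← egf_one, egf_mul, egf_sub]
  congr 1
  funext n
  cases n with
  | zero => simp [polyExpCoeff_zero]
  | succ n =>
    rw [Pi.sub_apply, sum_range_succ, ← sum_range_choose_mul_polyBernoulli]
    simp

/-- The `n!`-normalized coefficients of `C(t) = Ei_k(log(1+t)) / t`. -/
noncomputable def polyExpQuotCoeff (k : ℤ) (m : ℕ) : ℝ := polyExpCoeff k (m + 1) / (m + 1)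

theorem egf_polyExpCoeff (k : ℤ) :
    egf (fun n => (polyExpCoeff k n : ℝ)) = X * egf (polyExpQuotCoeff k) := by
  ext n
  cases n with
  | zero => simp [coeff_egf, polyExpCoeff_zero]
  | succ n =>
    rw [coeff_succ_X_mul, coeff_egf, coeff_egf, polyExpQuotCoeff, Nat.factorial_succ]
    push_cast
    field_simp

theorem egf_polyBernoulli (k : ℤ) :
    egf (fun n => (polyBernoulli k n : ℝ)) =
      bernoulliPowerSeries ℝ * egf (polyExpQuotCoeff k) := by
  apply mul_right_cancel₀ exp_sub_one_ne_zero
  rw [egf_polyBernoulli_mul_exp_sub_one, egf_polyExpCoeff, mul_right_comm,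
    bernoulliPowerSeries_mul_exp_sub_one]

theorem polyBernoulliPoly_eq_sum (k : ℤ) (n : ℕ) (x : ℝ) :
    polyBernoulliPoly k n x =
      ∑ j ∈ range (n + 1), n.choose j * bernoulliPolyFun j x * polyExpQuotCoeff k (n - j) := by
  have h : egf (polyBernoulliPoly k · x) =
      egf (bernoulliPolyFun · x) * egf (polyExpQuotCoeff k) := by
    calc egf (polyBernoulliPoly k · x)
        = egf (fun n => (polyBernoulli k n : ℝ)) * rescale x (exp ℝ) := by
          rw [← egf_pow, egf_mul]
          rfl
      _ = _ := by
          rw [egf_polyBernoulli, egf_bernoulliPolyFun]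
          ring
  rw [egf_mul] at h
  exact congrFun (egf_injective h) n

/-- Distribution-type formula for the type 2 poly-Bernoulli polynomials. -/
theorem polyBernoulliPoly_distribution (k : ℤ) (d : ℕ) (hd : 0 < d) (n : ℕ) (x : ℝ) :
    polyBernoulliPoly k n x =
      ∑ j ∈ Finset.range (n + 1), ∑ i ∈ Finset.range d, ∑ l ∈ Finset.Icc 1 (n - j + 1),
        (n.choose j : ℝ) * (d : ℝ) ^ ((j : ℤ) - 1) * bernoulliPolyFun j ((x + i) / d) *
          (stirling1 (n - j + 1) l : ℝ) / (((n - j : ℕ) + 1) * (l : ℝ) ^ (k - 1)) := by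
  rw [polyBernoulliPoly_eq_sum]
  refine sum_congr rfl fun j _ => ?_
  rw [bernoulliPolyFun_eq_zpow_mul_sum hd.ne' j x, polyExpQuotCoeff, polyExpCoeff]
  push_cast
  simp only [mul_sum, sum_mul, sum_div]
  rw [sum_comm]
  refine sum_congr rfl fun i _ => sum_congr rfl fun l _ => ?_
  field_simp
end

section
/- Reciprocity for Apostol's generalized Dedekind sums: for relatively prime positive integers h, m and positive integer p, h m^p S_p(h,m) + m h^p S_p(m,h) = \sum_{\mu=0}^{m-1} \sum_{\nu=0}^{h-1} (mh)^{p-1} (\mu h + m\nu) \overline{B}_p(\nu/h + \mu/m). -/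
/-!
Split the weight `μ h + m ν` into its two summands. In the part weighted by `μ h`, the inner sum
over `ν` is collapsed by the multiplication theorem `B̄_p(h x) = h^(p-1) ∑_{ν<h} B̄_p(x + ν/h)` at
`x = μ/m`, which leaves `h m^p S_p(h,m)`; the other part is the same computation with `h` and `m`
exchanged. The multiplication theorem for `B̄_p` follows from the one for the polynomial `B_p`
(`bernoulliFun_mul`): both sides are `1/h`-periodic, and on `[0, 1/h)` no fractional part
intervenes.
-/

open Finset

theorem bernoulliPolyFun_eq_bernoulliFun (n : ℕ) : bernoulliPolyFun n = bernoulliFun n := by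
  ext x
  simp only [bernoulliPolyFun, bernoulliFun, Polynomial.bernoulli, Polynomial.map_sum,
    Polynomial.eval_finsetSum, Polynomial.map_monomial, Polynomial.eval_monomial]
  refine sum_congr rfl fun l _ => ?_
  simp only [eq_ratCast, Rat.cast_mul, Rat.cast_natCast]
  ring

theorem bernoulliBar_periodic (n : ℕ) : Function.Periodic (bernoulliBar n) 1 :=
  (Int.fract_periodic ℝ).comp (bernoulliPolyFun n)

theorem bernoulliBar_of_mem_Ico {n : ℕ} {x : ℝ} (hx : x ∈ Set.Ico 0 1) :
    bernoulliBar n x = bernoulliFun n x := by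
  rw [bernoulliBar, Int.fract_eq_self.2 hx, bernoulliPolyFun_eq_bernoulliFun]

theorem bernoulliBar_mul (k : ℕ) {h : ℕ} (hh : h ≠ 0) (x : ℝ) :
    bernoulliBar k (h * x) = h ^ k / h * ∑ i ∈ range h, bernoulliBar k (x + i / h) := by
  have hpos : (0 : ℝ) < h := by positivity
  have hsum (x : ℝ) : ∑ i ∈ range h, bernoulliBar k (x + 1 / h + i / h) =
      ∑ i ∈ range h, bernoulliBar k (x + i / h) := by
    have shift := sum_range_succ' (fun i : ℕ => bernoulliBar k (x + i / h)) h
    rw [sum_range_succ, div_self hpos.ne', bernoulliBar_periodic k x] at shift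
    simp only [Nat.cast_add, Nat.cast_one, add_div, Nat.cast_zero, zero_div, add_zero,
      add_left_inj] at shift
    simp only [add_right_comm x]
    exact (shift.trans (sum_congr rfl fun i _ => by rw [add_assoc])).symm
  have hperiodic : Function.Periodic (fun x => bernoulliBar k (h * x) -
      h ^ k / h * ∑ i ∈ range h, bernoulliBar k (x + i / h)) (1 / h) := fun x => by
    simp only [mul_add, mul_one_div_cancel hpos.ne', bernoulliBar_periodic k (h * x), hsum]
  obtain ⟨y, ⟨hy0, hy1⟩, hxy⟩ := hperiodic.exists_mem_Ico₀ (by positivity) x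
  rw [← sub_eq_zero, hxy, sub_eq_zero, bernoulliBar_of_mem_Ico, bernoulliFun_mul k hh y]
  · congr 1
    refine sum_congr rfl fun i hi => (bernoulliBar_of_mem_Ico ⟨by positivity, ?_⟩).symm
    have hi : (i : ℝ) + 1 ≤ h := by exact_mod_cast mem_range.1 hi
    calc y + i / h < 1 / h + i / h := by gcongr
      _ ≤ 1 := by rw [← add_div, div_le_one hpos]; linarith
  · exact ⟨by positivity, by rwa [lt_div_iff₀ hpos, mul_comm] at hy1⟩

theorem genDedekindSum_eq_sum_range (p h m : ℕ) :
    genDedekindSum p h m = ∑ μ ∈ range m, (μ / m : ℝ) * bernoulliBar p (h * μ / m) := by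
  rcases Nat.eq_zero_or_pos m with rfl | hm
  · simp [genDedekindSum]
  · rw [genDedekindSum, range_eq_Ico, sum_eq_sum_Ico_succ_bot hm]
    simp

theorem sum_range_sum_range_mul_bernoulliBar {p h m : ℕ} (hp : p ≠ 0) (hh : h ≠ 0) (hm : m ≠ 0) :
    ∑ μ ∈ range m, ∑ ν ∈ range h,
        ((m : ℝ) * h) ^ (p - 1) * ((μ : ℝ) * h) * bernoulliBar p ((μ : ℝ) / m + (ν : ℝ) / h) =
      h * (m : ℝ) ^ p * genDedekindSum p h m := by
  have hh' : (h : ℝ) ≠ 0 := by positivity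
  have hm' : (m : ℝ) ≠ 0 := by positivity
  obtain ⟨q, rfl⟩ := Nat.exists_eq_add_one_of_ne_zero hp
  rw [genDedekindSum_eq_sum_range, mul_sum]
  refine sum_congr rfl fun μ _ => ?_
  rw [← mul_sum, mul_div_assoc, bernoulliBar_mul _ hh, Nat.add_sub_cancel]
  field_simp
  ring

theorem genDedekind_reciprocity_general (h m p : ℕ) (hh : 0 < h) (hm : 0 < m)
    (hp : 0 < p) :
    (h : ℝ) * (m : ℝ) ^ p * genDedekindSum p h m +
        (m : ℝ) * (h : ℝ) ^ p * genDedekindSum p m h =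
      ∑ μ ∈ Finset.range m, ∑ ν ∈ Finset.range h,
        ((m : ℝ) * h) ^ (p - 1) * ((μ : ℝ) * h + (m : ℝ) * ν) *
          bernoulliBar p ((ν : ℝ) / h + (μ : ℝ) / m) := by
  rw [← sum_range_sum_range_mul_bernoulliBar hp.ne' hh.ne' hm.ne',
    ← sum_range_sum_range_mul_bernoulliBar hp.ne' hm.ne' hh.ne', sum_comm (s := range h),
    ← sum_add_distrib]
  refine sum_congr rfl fun μ _ => ?_
  rw [← sum_add_distrib]
  refine sum_congr rfl fun ν _ => ?_
  rw [add_comm ((ν : ℝ) / h)]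
  ring

/-- Reciprocity for Apostol's generalized Dedekind sums. -/
theorem genDedekind_reciprocity (h m p : ℕ) (hh : 0 < h) (hm : 0 < m)
    (hcop : Nat.Coprime h m) (hp : 0 < p) :
    (h : ℝ) * (m : ℝ) ^ p * genDedekindSum p h m +
        (m : ℝ) * (h : ℝ) ^ p * genDedekindSum p m h =
      ∑ μ ∈ Finset.range m, ∑ ν ∈ Finset.range h,
        ((m : ℝ) * h) ^ (p - 1) * ((μ : ℝ) * h + (m : ℝ) * ν) *
          bernoulliBar p ((ν : ℝ) / h + (μ : ℝ) / m) :=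
  genDedekind_reciprocity_general h m p hh hm hp
end
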